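/- arXiv:1911.06199 — 5 statements merged into one kernel-verified Lean document; each statement's English description precedes it below -/
import Mathlib

section
/- Let F be a convex polytope contained in [0,1]^2 with vertex set V, and let g : F → ℝ be an affine function. Suppose for each v ∈ V, either g(v) = 0 or g(v) ≥ m for some m > 0. Let S = {x ∈ F : g(x) = 0} and assume S is nonempty. Then for every x ∈ F, g(x) ≥ m · d(x, S) / 2, where d(x, S) is the Euclidean distance from x to S. -/
/-!
Write `x ∈ F` as a convex combination `∑ w v • v` of the vertices and move every vertex with
`g v ≠ 0` to a fixed point `s₀ ∈ S`, keeping the zero vertices in place. The resulting point lies in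
the convex set `S`, and the displacement of each vertex costs at most `diam F ≤ 2`, which is at most
`2 g v / m`; summing with the weights `w v` and using that `g` preserves convex combinations gives
`m d(x, S) ≤ 2 g x`.
-/

open Metric Set

theorem AffineMap.map_sum_smul {ι E : Type*} [AddCommGroup E] [Module ℝ E] (g : E →ᵃ[ℝ] ℝ)
    (s : Finset ι) (w : ι → ℝ) (v : ι → E) (hw : ∑ i ∈ s, w i = 1) :
    g (∑ i ∈ s, w i • v i) = ∑ i ∈ s, w i * g (v i) := by
  rw [← s.affineCombination_eq_linear_combination v w hw, s.map_affineCombination v w hw,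
    s.affineCombination_eq_linear_combination _ w hw]
  rfl

theorem Convex.infDist_sum_smul_le {ι E : Type*} [SeminormedAddCommGroup E] [NormedSpace ℝ E]
    {S : Set E} (hS : Convex ℝ S) (s : Finset ι) (w : ι → ℝ) (v p : ι → E)
    (hw₀ : ∀ i ∈ s, 0 ≤ w i) (hw₁ : ∑ i ∈ s, w i = 1) (hp : ∀ i ∈ s, p i ∈ S) :
    infDist (∑ i ∈ s, w i • v i) S ≤ ∑ i ∈ s, w i * dist (v i) (p i) :=
  calc infDist (∑ i ∈ s, w i • v i) S
      ≤ ‖∑ i ∈ s, w i • v i - ∑ i ∈ s, w i • p i‖ := by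
        rw [← dist_eq_norm]; exact infDist_le_dist_of_mem (hS.sum_mem hw₀ hw₁ hp)
    _ = ‖∑ i ∈ s, w i • (v i - p i)‖ := by simp only [smul_sub, Finset.sum_sub_distrib]
    _ ≤ ∑ i ∈ s, ‖w i • (v i - p i)‖ := norm_sum_le _ _
    _ = ∑ i ∈ s, w i * dist (v i) (p i) := Finset.sum_congr rfl fun i hi => by
        rw [norm_smul, Real.norm_of_nonneg (hw₀ i hi), dist_eq_norm]

theorem EuclideanSpace.dist_le_sqrt_card_of_mem_Icc {n : ℕ} {a b : EuclideanSpace ℝ (Fin n)}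
    (ha : ∀ i, a i ∈ Icc (0 : ℝ) 1) (hb : ∀ i, b i ∈ Icc (0 : ℝ) 1) :
    dist a b ≤ √n := by
  rw [EuclideanSpace.dist_eq]
  gcongr
  calc ∑ i, dist (a i) (b i) ^ 2 ≤ ∑ _i : Fin n, (1 : ℝ) := Finset.sum_le_sum fun i _ => by
        rw [Real.dist_eq, sq_abs]
        nlinarith [ha i, hb i, Set.mem_Icc.mp (ha i), Set.mem_Icc.mp (hb i)]
    _ = n := by simp

theorem mul_infDist_zeroSet_le_mul {E : Type*} [SeminormedAddCommGroup E] [NormedSpace ℝ E]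
    (V : Finset E) (g : E →ᵃ[ℝ] ℝ) {m D : ℝ} (hm : 0 ≤ m)
    (hD : ∀ a ∈ convexHull ℝ (V : Set E), ∀ b ∈ convexHull ℝ (V : Set E), dist a b ≤ D)
    (hvert : ∀ v ∈ V, g v = 0 ∨ m ≤ g v)
    {s₀ : E} (hs₀ : s₀ ∈ {y ∈ convexHull ℝ (V : Set E) | g y = 0})
    {x : E} (hx : x ∈ convexHull ℝ (V : Set E)) :
    m * infDist x {y ∈ convexHull ℝ (V : Set E) | g y = 0} ≤ D * g x := by
  set S := {y ∈ convexHull ℝ (V : Set E) | g y = 0}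
  have hS : Convex ℝ S := (convex_convexHull ℝ _).inter ((convex_singleton 0).affine_preimage g)
  obtain ⟨w, hw₀, hw₁, rfl⟩ := Finset.mem_convexHull'.mp hx
  let p : E → E := fun v => if g v = 0 then v else s₀
  have hp : ∀ v ∈ V, p v ∈ S := fun v hv => by
    by_cases hgv : g v = 0
    · simp only [p, hgv, if_true]
      exact ⟨subset_convexHull ℝ _ (Finset.mem_coe.mpr hv), hgv⟩
    · simpa only [p, hgv, if_false] using hs₀
  have hmove : ∀ v ∈ V, m * dist v (p v) ≤ D * g v := fun v hv => by
    by_cases hgv : g v = 0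
    · simp [p, hgv]
    · have hdist : dist v s₀ ≤ D := hD v (subset_convexHull ℝ _ (Finset.mem_coe.mpr hv)) s₀ hs₀.1
      have hmg := (hvert v hv).resolve_left hgv
      simp only [p, hgv, if_false]
      nlinarith [dist_nonneg (x := v) (y := s₀)]
  calc m * infDist (∑ v ∈ V, w v • v) S
      ≤ m * ∑ v ∈ V, w v * dist v (p v) :=
        mul_le_mul_of_nonneg_left (hS.infDist_sum_smul_le V w id p hw₀ hw₁ hp) hm
    _ = ∑ v ∈ V, w v * (m * dist v (p v)) := by
        rw [Finset.mul_sum]; exact Finset.sum_congr rfl fun v _ => by ring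
    _ ≤ ∑ v ∈ V, w v * (D * g v) :=
        Finset.sum_le_sum fun v hv => mul_le_mul_of_nonneg_left (hmove v hv) (hw₀ v hv)
    _ = D * g (∑ v ∈ V, w v • v) := by
        rw [g.map_sum_smul V w (fun v => v) hw₁, Finset.mul_sum]
        exact Finset.sum_congr rfl fun v _ => by ring

theorem affine_min_value_estimate
    (V : Finset (EuclideanSpace ℝ (Fin 2)))
    (F : Set (EuclideanSpace ℝ (Fin 2)))
    (hF : F = convexHull ℝ (V : Set (EuclideanSpace ℝ (Fin 2))))
    (hFsq : F ⊆ {p | ∀ i, p i ∈ Set.Icc (0:ℝ) 1})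
    (g : EuclideanSpace ℝ (Fin 2) →ᵃ[ℝ] ℝ)
    (m : ℝ) (hm : 0 < m)
    (hvert : ∀ v ∈ V, g v = 0 ∨ m ≤ g v)
    (S : Set (EuclideanSpace ℝ (Fin 2)))
    (hS : S = {x ∈ F | g x = 0})
    (hSne : S.Nonempty) :
    ∀ x ∈ F, m * Metric.infDist x S / 2 ≤ g x := by
  intro x hx
  subst hF hS
  obtain ⟨s₀, hs₀⟩ := hSne
  have hdiam : ∀ a ∈ convexHull ℝ (V : Set _), ∀ b ∈ convexHull ℝ (V : Set _), dist a b ≤ 2 :=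
    fun a ha b hb => calc
      dist a b ≤ √(2 : ℕ) := EuclideanSpace.dist_le_sqrt_card_of_mem_Icc (hFsq ha) (hFsq hb)
      _ ≤ 2 := by rw [Real.sqrt_le_left (by norm_num)]; norm_num
  linarith [mul_infDist_zeroSet_le_mul V g hm.le hdiam hvert hs₀ hx]
end

section
/- Let π, π' : ℝ → ℝ be minimal valid functions for the Gomory–Johnson infinite group problem with parameter f, i.e., nonnegative, subadditive, periodic modulo 1, with π(0) = 0 and satisfying π(x) + π(f - x) = 1 for all x (and likewise for π'). If E(π) ⊆ E(π'), then P(π) ⊆ P(π'), where E(π) = {(x,y) : π(x)+π(y) = π(x+y)} and P(π) is the set of finite-support functions y : ℝ → ℤ₊ with ∑ r·y(r) ≡ f (mod 1) and ∑ π(r)·y(r) = 1. -/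
/-- Minimal valid function for the Gomory–Johnson infinite group problem with parameter `f`. -/
def MinimalValid (f : ℝ) (π : ℝ → ℝ) : Prop :=
  (∀ x, 0 ≤ π x) ∧ π 0 = 0 ∧ (∀ x y, π (x + y) ≤ π x + π y) ∧
  (∀ x, π (x + 1) = π x) ∧ (∀ x, π x + π (f - x) = 1)

/-- Additivity domain. -/
def Eset (π : ℝ → ℝ) : Set (ℝ × ℝ) := {p | π p.1 + π p.2 = π (p.1 + p.2)}

/-- `P(π)`: finite-support ℤ₊-valued functions with ∑ r·y(r) ≡ f (mod 1) and ∑ π(r)·y(r) = 1. -/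
def Pset (f : ℝ) (π : ℝ → ℝ) : Set (ℝ →₀ ℕ) :=
  {y | (∃ z : ℤ, (y.sum fun r n => r * (n : ℝ)) = f + z) ∧
       (y.sum fun r n => π r * (n : ℝ)) = 1}

/-- Valid function. -/
def ValidFn (f : ℝ) (π : ℝ → ℝ) : Prop :=
  (∀ x, 0 ≤ π x) ∧
  ∀ y : ℝ →₀ ℕ, (∃ z : ℤ, (y.sum fun r n => r * (n : ℝ)) = f + z) →
    1 ≤ (y.sum fun r n => π r * (n : ℝ))

/-!
For y ∈ P(π), the multiset m in which each r occurs y(r) times satisfies π(∑ m) = π(f) = 1 = ∑ π(r)y(r).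
Adding up m one element at a time, subadditivity makes every step π(a) + π(∑ s) ≥ π(a + ∑ s) tight,
so each step lies in E(π) ⊆ E(π'), and π' is additive along m as well: ∑ π'(r)y(r) = π'(f) = 1.
-/

theorem Finsupp.sum_map_toMultiset {α R : Type*} [CommSemiring R] (y : α →₀ ℕ) (g : α → R) :
    (y.toMultiset.map g).sum = y.sum fun r n => g r * n := by
  rw [Finsupp.toMultiset_map, Finsupp.sum_toMultiset,
    Finsupp.sum_mapDomain_index (h := fun a n => n • a) (fun _ => zero_nsmul _)
      (fun _ _ _ => add_nsmul _ _ _)]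
  simp only [nsmul_eq_mul, mul_comm]

theorem Multiset.apply_sum_eq_sum_map_of_additive_imp {M N N' : Type*} [AddCommMonoid M]
    [AddCommMonoid N] [PartialOrder N] [IsOrderedCancelAddMonoid N] [AddCommMonoid N']
    {g : M → N} {g' : M → N'} (hg0 : g 0 = 0) (hg : ∀ x y, g (x + y) ≤ g x + g y)
    (hg'0 : g' 0 = 0) (hadd : ∀ x y, g x + g y = g (x + y) → g' x + g' y = g' (x + y))
    (s : Multiset M) (hs : g s.sum = (s.map g).sum) : g' s.sum = (s.map g').sum := by
  induction s using Multiset.induction with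
  | empty => simp [hg'0]
  | cons a s ih =>
    simp only [Multiset.sum_cons, Multiset.map_cons] at hs ⊢
    have hsub : g s.sum ≤ (s.map g).sum := s.le_sum_of_subadditive g hg0.le hg
    have hsplit : g a + g s.sum = g (a + s.sum) :=
      le_antisymm (hs ▸ by gcongr) (hg a s.sum)
    have htail : g s.sum = (s.map g).sum := add_left_cancel (hsplit.trans hs)
    rw [← hadd a s.sum hsplit, ih htail]

theorem MinimalValid.apply_add_int {f : ℝ} {π : ℝ → ℝ} (hπ : MinimalValid f π) (z : ℤ) :
    π (f + z) = 1 := by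
  obtain ⟨-, h0, -, hper, hsym⟩ := hπ
  have hper : Function.Periodic π 1 := hper
  have hf : π f = 1 := by simpa [h0] using hsym 0
  simpa [hf] using hper.int_mul z f

theorem E_subset_implies_P_subset_general (f : ℝ)
    (π π' : ℝ → ℝ) (hπ : MinimalValid f π) (hπ' : MinimalValid f π')
    (hE : Eset π ⊆ Eset π') :
    Pset f π ⊆ Pset f π' := by
  rintro y ⟨⟨z, hz⟩, hy⟩
  refine ⟨⟨z, hz⟩, ?_⟩
  have hsum : y.toMultiset.sum = f + z := by
    rw [← hz, ← Finsupp.sum_map_toMultiset y (fun r => r), Multiset.map_id']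
  rw [← Finsupp.sum_map_toMultiset] at hy ⊢
  have hadditive : π' y.toMultiset.sum = (y.toMultiset.map π').sum :=
    Multiset.apply_sum_eq_sum_map_of_additive_imp hπ.2.1 hπ.2.2.1 hπ'.2.1
      (fun a b hab => hE (show (a, b) ∈ Eset π from hab)) y.toMultiset
      (by rw [hsum, hπ.apply_add_int, hy])
  rw [← hadditive, hsum, hπ'.apply_add_int]

theorem E_subset_implies_P_subset (f : ℝ) (hf : ∀ z : ℤ, f ≠ z)
    (π π' : ℝ → ℝ) (hπ : MinimalValid f π) (hπ' : MinimalValid f π')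
    (hE : Eset π ⊆ Eset π') :
    Pset f π ⊆ Pset f π' :=
  E_subset_implies_P_subset_general f π π' hπ hπ' hE
end

section
/- Let δ > 0. If a function π' : ℝ → ℝ is subadditive, π'(0) = 0, π' is affine linear on [0, δ] and on [−δ, 0], and π' is bounded, then π' is Lipschitz continuous on ℝ. -/
theorem subadditive_affine_near_zero_lipschitz (π' : ℝ → ℝ)
    (hsub : ∀ x y, π' (x + y) ≤ π' x + π' y)
    (h0 : π' 0 = 0)
    (δ : ℝ) (hδ : 0 < δ)
    (haffR : ∃ a b : ℝ, ∀ x ∈ Set.Icc (0:ℝ) δ, π' x = a * x + b)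
    (haffL : ∃ a b : ℝ, ∀ x ∈ Set.Icc (-δ) (0:ℝ), π' x = a * x + b)
    (hbdd : ∃ M : ℝ, ∀ x, |π' x| ≤ M) :
    ∃ K : NNReal, LipschitzWith K π' := by
  obtain ⟨a, b, hR⟩ := haffR
  obtain ⟨c, d, hL⟩ := haffL
  obtain ⟨M, hM⟩ := hbdd
  have hM0 : 0 ≤ M := le_trans (abs_nonneg _) (hM 0)
  have hb : b = 0 := by
    have := hR 0 ⟨le_refl 0, le_of_lt hδ⟩
    simpa [h0] using this.symm
  have hd : d = 0 := by
    have := hL 0 ⟨by linarith, le_refl 0⟩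
    simpa [h0] using this.symm
  set K0 : ℝ := max (max |a| |c|) (2 * M / δ) with hK0
  have hK0nn : 0 ≤ K0 := le_trans (abs_nonneg a) (le_trans (le_max_left _ _) (le_max_left _ _))
  have key : ∀ x y : ℝ, x ≤ y → |π' y - π' x| ≤ K0 * (y - x) := by
    intro x y hxy
    by_cases h : y - x ≤ δ
    · have h1 : π' y - π' x ≤ K0 * (y - x) := by
        have hs := hsub x (y - x)
        have : π' (x + (y - x)) = π' y := by ring_nf
        rw [this] at hs
        have hv : π' (y - x) = a * (y - x) + b := hR (y - x) ⟨by linarith, h⟩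
        have : a * (y - x) ≤ K0 * (y - x) := by
          apply mul_le_mul_of_nonneg_right _ (by linarith)
          calc a ≤ |a| := le_abs_self a
            _ ≤ K0 := le_trans (le_max_left _ _) (le_max_left _ _)
        linarith
      have h2 : π' x - π' y ≤ K0 * (y - x) := by
        have hs := hsub y (x - y)
        have : π' (y + (x - y)) = π' x := by ring_nf
        rw [this] at hs
        have hv : π' (x - y) = c * (x - y) + d := hL (x - y) ⟨by linarith, by linarith⟩
        have : c * (x - y) ≤ K0 * (y - x) := by
          have hc : -c ≤ K0 :=
            le_trans (le_trans (neg_le_abs c) (le_max_right |a| |c|)) (le_max_left _ _)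
          nlinarith
        linarith
      rw [abs_sub_le_iff]
      exact ⟨h1, h2⟩
    · have h2M : |π' y - π' x| ≤ 2 * M := by
        calc |π' y - π' x| ≤ |π' y| + |π' x| := abs_sub _ _
          _ ≤ M + M := add_le_add (hM y) (hM x)
          _ = 2 * M := by ring
      have : 2 * M ≤ K0 * (y - x) := by
        have h1 : 2 * M / δ ≤ K0 := le_max_right _ _
        have h2 : 2 * M = (2 * M / δ) * δ := by field_simp
        nlinarith
      linarith
  refine ⟨⟨K0, hK0nn⟩, ?_⟩
  apply LipschitzWith.of_dist_le_mul
  intro x y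
  rcases le_total x y with h | h
  · have := key x y h
    rw [Real.dist_eq, Real.dist_eq, abs_sub_comm, abs_of_nonpos (by linarith : x - y ≤ 0)]
    show _ ≤ K0 * _
    simpa [NNReal.coe_mk] using le_trans this (by nlinarith [key x y h] : K0 * (y - x) ≤ K0 * -(x - y))
  · have := key y x h
    rw [Real.dist_eq, Real.dist_eq, abs_of_nonneg (by linarith : 0 ≤ x - y)]
    show _ ≤ K0 * _
    simpa [NNReal.coe_mk, abs_sub_comm] using le_trans this (le_of_eq (by ring))
end

section
/- Let π be a valid function (for the infinite group problem with parameter f) that is a weak facet. Then π is minimal valid. Formally: if π is valid and not minimal, then there exists a minimal valid function π' with P(π) ⊊ P(π'), contradicting the weak facet property. -/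
/-
A function dominated pointwise by `π` has a larger value on every `y`, so if it is valid its
face contains `P(π)`. A minimal valid `π' ≤ π` is valid by subadditivity and periodicity, so the
weak-facet property forces `P(π) = P(π')`. But the symmetry condition `π' x + π' (f - x) = 1` puts
`y = e_{x₀} + e_{f - x₀}` into `P(π')`, hence into `P(π)`; then `π x₀ + π (f - x₀) = 1` as well,
which contradicts `π' x₀ < π x₀` and `π' (f - x₀) ≤ π (f - x₀)`.
-/

lemma apply_mul_natCast_le_of_subadditive {π : ℝ → ℝ} (h0 : π 0 ≤ 0)
    (hsub : ∀ x y, π (x + y) ≤ π x + π y) (a : ℝ) (n : ℕ) :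
    π (a * n) ≤ π a * n := by
  simpa [Finset.sum_const, mul_comm] using
    Finset.le_sum_of_subadditive π h0 hsub (Finset.range n) (fun _ => a)

lemma Finsupp.apply_sum_le_of_subadditive {π : ℝ → ℝ} (h0 : π 0 ≤ 0)
    (hsub : ∀ x y, π (x + y) ≤ π x + π y) (y : ℝ →₀ ℕ) :
    π (y.sum fun r n => r * (n : ℝ)) ≤ y.sum fun r n => π r * (n : ℝ) :=
  (Finset.le_sum_of_subadditive π h0 hsub _ _).trans <|
    Finset.sum_le_sum fun r _ => apply_mul_natCast_le_of_subadditive h0 hsub r (y r)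

lemma Finsupp.sum_single_one_add_single_one (g : ℝ → ℝ) (a b : ℝ) :
    ((Finsupp.single a 1 + Finsupp.single b 1 : ℝ →₀ ℕ).sum fun r n => g r * (n : ℝ)) =
      g a + g b := by
  rw [Finsupp.sum_add_index' (by simp) (by intro r m n; push_cast; ring),
    Finsupp.sum_single_index (by simp), Finsupp.sum_single_index (by simp)]
  simp

namespace MinimalValid

variable {f : ℝ} {π : ℝ → ℝ}

lemma apply_f (h : MinimalValid f π) : π f = 1 := by
  simpa [h.2.1] using h.2.2.2.2 0

lemma apply_add_int_s11 (h : MinimalValid f π) (x : ℝ) (z : ℤ) : π (x + z) = π x :=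
  by simpa using (Function.Periodic.int_mul (f := π) h.2.2.2.1 z) x

lemma validFn (h : MinimalValid f π) : ValidFn f π := by
  refine ⟨h.1, fun y ⟨z, hz⟩ => ?_⟩
  calc (1 : ℝ) = π (y.sum fun r n => r * (n : ℝ)) := by rw [hz, h.apply_add_int_s11, h.apply_f]
    _ ≤ _ := Finsupp.apply_sum_le_of_subadditive h.2.1.le h.2.2.1 y

lemma single_add_single_mem_Pset (h : MinimalValid f π) (x : ℝ) :
    Finsupp.single x 1 + Finsupp.single (f - x) 1 ∈ Pset f π := by
  refine ⟨⟨0, ?_⟩, ?_⟩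
  · simpa using Finsupp.sum_single_one_add_single_one id x (f - x)
  · rw [Finsupp.sum_single_one_add_single_one]
    exact h.2.2.2.2 x

end MinimalValid

lemma Pset_subset_Pset_of_le {f : ℝ} {π π' : ℝ → ℝ} (hπ' : ValidFn f π')
    (hle : ∀ x, π' x ≤ π x) : Pset f π ⊆ Pset f π' := by
  rintro y ⟨hz, hy⟩
  refine ⟨hz, le_antisymm ?_ (hπ'.2 y hz)⟩
  rw [← hy]
  exact Finsupp.sum_le_sum fun r _ => mul_le_mul_of_nonneg_right (hle r) (Nat.cast_nonneg _)

theorem weak_facet_implies_minimal_general (f : ℝ)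
    (π : ℝ → ℝ)
    (hdom : ¬ MinimalValid f π →
      ∃ π' : ℝ → ℝ, MinimalValid f π' ∧ (∀ x, π' x ≤ π x) ∧ ∃ x₀, π' x₀ < π x₀)
    (hwf : ∀ π' : ℝ → ℝ, ValidFn f π' → Pset f π ⊆ Pset f π' → Pset f π = Pset f π') :
    MinimalValid f π := by
  by_contra hnm
  obtain ⟨π', hmin, hle, x₀, hx₀⟩ := hdom hnm
  have hP := hwf π' hmin.validFn (Pset_subset_Pset_of_le hmin.validFn hle)
  have hy : Finsupp.single x₀ 1 + Finsupp.single (f - x₀) 1 ∈ Pset f π :=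
    hP ▸ hmin.single_add_single_mem_Pset x₀
  have hπ_sum := hy.2
  rw [Finsupp.sum_single_one_add_single_one] at hπ_sum
  linarith [hmin.2.2.2.2 x₀, hle (f - x₀)]

theorem weak_facet_implies_minimal (f : ℝ) (hf : ∀ z : ℤ, f ≠ z)
    (π : ℝ → ℝ) (hπ : ValidFn f π)
    (hdom : ¬ MinimalValid f π →
      ∃ π' : ℝ → ℝ, MinimalValid f π' ∧ (∀ x, π' x ≤ π x) ∧ ∃ x₀, π' x₀ < π x₀)
    (hwf : ∀ π' : ℝ → ℝ, ValidFn f π' → Pset f π ⊆ Pset f π' → Pset f π = Pset f π') :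
    MinimalValid f π :=
  weak_facet_implies_minimal_general f π hdom hwf
end

section
/- Let π be a minimal valid function that is continuous and piecewise linear over a locally finite polyhedral complex of ℝ, and suppose π is extreme, i.e., π = (π¹+π²)/2 with π¹, π² minimal valid implies π¹ = π² = π. If π' is a minimal valid function with E(π) ⊆ E(π'), and π' is Lipschitz continuous, and the difference π̄ = π' − π satisfies the hypotheses of the perturbation theorem (Lipschitz, π̄(0)=π̄(f)=0, periodic, additive on E(π)), then there exists ε > 0 such that π ± ε·π̄ are minimal valid; hence π̄ = 0 and π' = π. -/
/-- `π` is piecewise linear over a locally finite one-dimensional polyhedral complex: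
there is a locally finite breakpoint set `B`, and `π` is affine on every open interval
avoiding `B`. -/
def PiecewiseLinearLocFin (π : ℝ → ℝ) : Prop :=
  ∃ B : Set ℝ, (∀ K : Set ℝ, IsCompact K → (B ∩ K).Finite) ∧
    ∀ a b : ℝ, a < b → (Set.Ioo a b ∩ B = ∅) →
      ∃ c d : ℝ, ∀ x ∈ Set.Ioo a b, π x = c * x + d


/-!
Write `Δπ(x, y) = π x + π y - π (x + y)`. Near an additive point, continuity and piecewise
linearity make `Δπ`, as a function of the displacement, linear on each of the six sectors cut
out by the lines `s = 0`, `t = 0`, `s + t = 0`, so it dominates a multiple of the distance to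
its zero set; near a non-additive point `Δπ` is bounded away from `0`. Compactness of `[0, 1]²`
and periodicity give `c * dist q E(π) ≤ Δπ q` for all `q`. A `K`-Lipschitz `π̄` additive on
`E(π)` has `|Δπ̄ q| ≤ 4 K dist q E(π)`, so `π ± ε π̄` stays subadditive for small `ε`, and the
remaining conditions of minimality are linear. Extremality then forces `π̄ = 0`.
-/

open Filter Topology Set Function

/-- `delta π (x, y)` is the paper's `Δπ(x, y)`. -/
def delta (π : ℝ → ℝ) (q : ℝ × ℝ) : ℝ := π q.1 + π q.2 - π (q.1 + q.2)

section Delta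

variable {π : ℝ → ℝ}

lemma mem_Eset_iff_delta_eq_zero {q : ℝ × ℝ} : q ∈ Eset π ↔ delta π q = 0 := by
  simp [Eset, delta, sub_eq_zero]

lemma delta_nonneg (hsub : ∀ x y, π (x + y) ≤ π x + π y) (q : ℝ × ℝ) : 0 ≤ delta π q :=
  sub_nonneg.2 (hsub q.1 q.2)

lemma continuous_delta (hπ : Continuous π) : Continuous (delta π) := by
  unfold delta; fun_prop

lemma delta_add_intCast (hper : Periodic π 1) (q : ℝ × ℝ) (m n : ℤ) :
    delta π (q + ((m : ℝ), (n : ℝ))) = delta π q := by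
  have h (x : ℝ) (k : ℤ) : π (x + k) = π x := by simpa using hper.int_mul k x
  have hsum : q.1 + m + (q.2 + n) = q.1 + q.2 + ((m + n : ℤ) : ℝ) := by push_cast; ring
  simp only [delta, Prod.fst_add, Prod.snd_add, hsum, h]

lemma abs_delta_sub_delta_le {K : NNReal} (hπ : LipschitzWith K π) (q e : ℝ × ℝ) :
    |delta π q - delta π e| ≤ 4 * K * dist q e := by
  have hlip (x y : ℝ) : |π x - π y| ≤ K * |x - y| := by
    simpa [Real.dist_eq] using hπ.dist_le_mul x y
  have h1 : |q.1 - e.1| ≤ dist q e := by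
    rw [Prod.dist_eq, ← Real.dist_eq]; exact le_max_left _ _
  have h2 : |q.2 - e.2| ≤ dist q e := by
    rw [Prod.dist_eq, ← Real.dist_eq]; exact le_max_right _ _
  have h3 : |q.1 + q.2 - (e.1 + e.2)| ≤ 2 * dist q e := by
    calc _ = |(q.1 - e.1) + (q.2 - e.2)| := by ring_nf
      _ ≤ _ := (abs_add_le _ _).trans (by linarith)
  calc |delta π q - delta π e|
      = |(π q.1 - π e.1) + (π q.2 - π e.2) - (π (q.1 + q.2) - π (e.1 + e.2))| := by
        unfold delta; ring_nf
    _ ≤ K * |q.1 - e.1| + K * |q.2 - e.2| + K * |q.1 + q.2 - (e.1 + e.2)| :=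
        (abs_sub _ _).trans (add_le_add ((abs_add_le _ _).trans
          (add_le_add (hlip _ _) (hlip _ _))) (hlip _ _))
    _ ≤ K * dist q e + K * dist q e + K * (2 * dist q e) := by gcongr
    _ = 4 * K * dist q e := by ring

end Delta

/-- The germ of a continuous piecewise linear function at a breakpoint: slope `a` to the
right of `0` and slope `a'` to the left. -/
def kink (a a' t : ℝ) : ℝ := a * max t 0 + a' * min t 0

section Kink

variable {a a' : ℝ}

lemma kink_mul {α : ℝ} (hα : 0 ≤ α) (t : ℝ) : kink a a' (α * t) = α * kink a a' t := by
  have hmax : max (α * t) 0 = α * max t 0 := by rw [mul_max_of_nonneg _ _ hα, mul_zero]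
  have hmin : min (α * t) 0 = α * min t 0 := by rw [mul_min_of_nonneg _ _ hα, mul_zero]
  simp only [kink, hmax, hmin]; ring

lemma kink_add {s t : ℝ} (h : 0 ≤ s * t) : kink a a' (s + t) = kink a a' s + kink a a' t := by
  rcases mul_nonneg_iff.1 h with ⟨hs, ht⟩ | ⟨hs, ht⟩
  · simp [kink, hs, ht, add_nonneg hs ht]; ring
  · simp [kink, hs, ht, add_nonpos hs ht]; ring

lemma kink_mul_add_mul {α β s t : ℝ} (hα : 0 ≤ α) (hβ : 0 ≤ β) (h : 0 ≤ s * t) :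
    kink a a' (α * s + β * t) = α * kink a a' s + β * kink a a' t := by
  rw [kink_add (by nlinarith [mul_nonneg (mul_nonneg hα hβ) h]), kink_mul hα, kink_mul hβ]

lemma kink_of_nonneg {t : ℝ} (ht : 0 ≤ t) : kink a a' t = a * t := by simp [kink, ht]

lemma kink_of_nonpos {t : ℝ} (ht : t ≤ 0) : kink a a' t = a' * t := by simp [kink, ht]

end Kink

section PiecewiseLinear

variable {π : ℝ → ℝ}

lemma exists_pos_eq_of_mem_of_abs_sub_lt {B : Set ℝ}
    (hB : ∀ K : Set ℝ, IsCompact K → (B ∩ K).Finite) (x₀ : ℝ) :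
    ∃ r > 0, ∀ b ∈ B, |b - x₀| < r → b = x₀ := by
  have hT : ((B ∩ Icc (x₀ - 1) (x₀ + 1)) \ {x₀}).Finite := (hB _ isCompact_Icc).sdiff
  obtain ⟨r, hr, hball⟩ := Metric.isOpen_iff.1 hT.isClosed.isOpen_compl x₀ (by simp)
  refine ⟨min r 1, lt_min hr one_pos, fun b hb hbx => by_contra fun hne => hball ?_ ⟨⟨hb, ?_⟩, hne⟩⟩
  · rw [Metric.mem_ball, Real.dist_eq]; exact hbx.trans_le (min_le_left _ _)
  · have := hbx.trans_le (min_le_right _ _); rw [abs_lt] at this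
    constructor <;> linarith

lemma exists_slope_of_affine_on_Ioo (hcont : Continuous π) {a b : ℝ} (hab : a < b)
    (haff : ∃ c d : ℝ, ∀ x ∈ Ioo a b, π x = c * x + d) :
    ∃ c, ∀ x ∈ Icc a b, ∀ y ∈ Icc a b, π y = π x + c * (y - x) := by
  obtain ⟨c, d, h⟩ := haff
  have hIcc : EqOn π (fun x => c * x + d) (Icc a b) := by
    rw [← closure_Ioo hab.ne]
    exact EqOn.closure h hcont (by fun_prop)
  exact ⟨c, fun x hx y hy => by rw [hIcc hx, hIcc hy]; ring⟩

lemma PiecewiseLinearLocFin.exists_kink (hpwl : PiecewiseLinearLocFin π) (hcont : Continuous π)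
    (x₀ : ℝ) : ∃ a a' : ℝ, ∀ᶠ t in 𝓝 0, π (x₀ + t) = π x₀ + kink a a' t := by
  obtain ⟨B, hB, haff⟩ := hpwl
  obtain ⟨r, hr, hBr⟩ := exists_pos_eq_of_mem_of_abs_sub_lt hB x₀
  have hfree {u v : ℝ} (hu : x₀ - r ≤ u) (hv : v ≤ x₀ + r) (hx : x₀ ∉ Ioo u v) :
      Ioo u v ∩ B = ∅ := by
    refine eq_empty_of_forall_notMem fun b ⟨hb, hbB⟩ => ?_
    have := hBr b hbB (abs_lt.2 ⟨by linarith [hb.1], by linarith [hb.2]⟩)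
    exact hx (this ▸ hb)
  obtain ⟨a, ha⟩ := exists_slope_of_affine_on_Ioo hcont (by linarith : x₀ < x₀ + r)
    (haff _ _ (by linarith) (hfree (by linarith) le_rfl (fun h => lt_irrefl _ h.1)))
  obtain ⟨a', ha'⟩ := exists_slope_of_affine_on_Ioo hcont (by linarith : x₀ - r < x₀)
    (haff _ _ (by linarith) (hfree le_rfl (by linarith) (fun h => lt_irrefl _ h.2)))
  refine ⟨a, a', Metric.eventually_nhds_iff.2 ⟨r, hr, fun t ht => ?_⟩⟩
  rw [Real.dist_eq, sub_zero, abs_lt] at ht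
  rcases le_total 0 t with h | h
  · rw [kink_of_nonneg h, ha x₀ ⟨le_rfl, by linarith⟩ (x₀ + t) ⟨by linarith, by linarith⟩]
    ring
  · rw [kink_of_nonpos h, ha' x₀ ⟨by linarith, le_rfl⟩ (x₀ + t) ⟨by linarith, by linarith⟩]
    ring

end PiecewiseLinear

/-- The six rays along which the lines `s = 0`, `t = 0`, `s + t = 0` cut the plane into
sectors, listed counterclockwise. -/
def sectorRay : Fin 6 → ℝ × ℝ := ![(1, 0), (0, 1), (-1, 1), (-1, 0), (0, -1), (1, -1)]

lemma norm_sectorRay_le (i : Fin 6) : ‖sectorRay i‖ ≤ 1 := by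
  fin_cases i <;> simp [sectorRay, Prod.norm_def]

lemma sectorRay_mul_nonneg (i : Fin 6) :
    0 ≤ (sectorRay i).1 * (sectorRay (i + 1)).1 ∧ 0 ≤ (sectorRay i).2 * (sectorRay (i + 1)).2 ∧
      0 ≤ ((sectorRay i).1 + (sectorRay i).2) *
        ((sectorRay (i + 1)).1 + (sectorRay (i + 1)).2) := by
  fin_cases i <;> simp [sectorRay, Fin.add_def]

lemma exists_mem_sector (v : ℝ × ℝ) : ∃ i : Fin 6, ∃ α β : ℝ, 0 ≤ α ∧ 0 ≤ β ∧
    α + β ≤ 2 * ‖v‖ ∧ v = α • sectorRay i + β • sectorRay (i + 1) := by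
  obtain ⟨s, t⟩ := v
  have hs : |s| ≤ ‖(s, t)‖ := by simp [Prod.norm_def]
  have ht : |t| ≤ ‖(s, t)‖ := by simp [Prod.norm_def]
  have := le_abs_self s; have := neg_abs_le s; have := le_abs_self t; have := neg_abs_le t
  rcases le_total 0 s with hs0 | hs0 <;> rcases le_total 0 t with ht0 | ht0
  · exact ⟨0, s, t, hs0, ht0, by linarith, by simp [sectorRay]⟩
  · rcases le_total 0 (s + t) with hst | hst
    · exact ⟨5, -t, s + t, by linarith, hst, by linarith, by simp [sectorRay]⟩
    · exact ⟨4, -(s + t), s, by linarith, hs0, by linarith, by simp [sectorRay]⟩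
  · rcases le_total 0 (s + t) with hst | hst
    · exact ⟨1, s + t, -s, hst, by linarith, by linarith, by simp [sectorRay]⟩
    · exact ⟨2, t, -(s + t), ht0, by linarith, by linarith, by simp [sectorRay]⟩
  · exact ⟨3, -s, -t, by linarith, by linarith, by linarith, by simp [sectorRay]⟩

lemma norm_smul_add_smul_sectorRay_le {α β : ℝ} (hα : 0 ≤ α) (hβ : 0 ≤ β) (i j : Fin 6) :
    ‖α • sectorRay i + β • sectorRay j‖ ≤ α + β := by
  calc _ ≤ α * ‖sectorRay i‖ + β * ‖sectorRay j‖ := by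
        refine (norm_add_le _ _).trans_eq ?_
        rw [norm_smul, norm_smul, Real.norm_of_nonneg hα, Real.norm_of_nonneg hβ]
    _ ≤ α * 1 + β * 1 := by gcongr <;> exact norm_sectorRay_le _
    _ = α + β := by ring

lemma exists_mem_Icc_mul_eq_zero {c h γ : ℝ} (hγ : 0 ≤ γ) (hh : h = 0 ∨ c ≤ h) :
    ∃ γ' ∈ Icc 0 γ, γ' * h = 0 ∧ c * (γ - γ') ≤ (γ - γ') * h := by
  rcases hh with hh | hh
  · exact ⟨γ, ⟨hγ, le_rfl⟩, by simp [hh], by simp⟩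
  · exact ⟨0, ⟨le_rfl, hγ⟩, zero_mul _, by nlinarith⟩

lemma exists_pos_forall_eq_zero_or_le {ι : Type*} [Finite ι] {g : ι → ℝ} (hg : ∀ i, 0 ≤ g i) :
    ∃ c > 0, ∀ i, g i = 0 ∨ c ≤ g i := by
  refine (eventually_mem_nhdsWithin.and (eventually_all.2 fun i => ?_)).exists (f := 𝓝[>] 0)
  rcases (hg i).eq_or_lt with h | h
  · exact Eventually.of_forall fun _ => Or.inl h.symm
  · exact (eventually_le_nhds h).filter_mono nhdsWithin_le_nhds |>.mono fun _ => Or.inr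

lemma exists_dist_le_of_sectorwise_linear {H : ℝ × ℝ → ℝ}
    (hlin : ∀ (i : Fin 6) (α β : ℝ), 0 ≤ α → 0 ≤ β → H (α • sectorRay i + β • sectorRay (i + 1))
      = α * H (sectorRay i) + β * H (sectorRay (i + 1)))
    (hnn : ∀ᶠ v in 𝓝 0, 0 ≤ H v) :
    ∃ c > 0, ∀ v, ∃ v', H v' = 0 ∧ ‖v'‖ ≤ 2 * ‖v‖ ∧ c * dist v v' ≤ H v := by
  have hray (i : Fin 6) : 0 ≤ H (sectorRay i) := by
    obtain ⟨ρ, hρ, hball⟩ := Metric.eventually_nhds_iff.1 hnn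
    have hsmall : dist ((ρ / 2) • sectorRay i + (0 : ℝ) • sectorRay (i + 1)) 0 < ρ := by
      rw [dist_zero_right]
      linarith [norm_smul_add_smul_sectorRay_le (by positivity : 0 ≤ ρ / 2) le_rfl i (i + 1)]
    have := hball hsmall
    rw [hlin i _ _ (by positivity) le_rfl, zero_mul, add_zero] at this
    exact (mul_nonneg_iff_of_pos_left (by positivity)).1 this
  obtain ⟨c, hc, hcH⟩ := exists_pos_forall_eq_zero_or_le hray
  refine ⟨c, hc, fun v => ?_⟩
  obtain ⟨i, α, β, hα, hβ, hαβ, rfl⟩ := exists_mem_sector v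
  -- drop the component along each ray on which `H` is positive
  obtain ⟨α', ⟨hα'0, hα'α⟩, hα'H, hα'c⟩ := exists_mem_Icc_mul_eq_zero hα (hcH i)
  obtain ⟨β', ⟨hβ'0, hβ'β⟩, hβ'H, hβ'c⟩ := exists_mem_Icc_mul_eq_zero hβ (hcH (i + 1))
  refine ⟨α' • sectorRay i + β' • sectorRay (i + 1), ?_, ?_, ?_⟩
  · rw [hlin i _ _ hα'0 hβ'0, hα'H, hβ'H, add_zero]
  · linarith [norm_smul_add_smul_sectorRay_le hα'0 hβ'0 i (i + 1)]
  · have hdiff : α • sectorRay i + β • sectorRay (i + 1) -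
        (α' • sectorRay i + β' • sectorRay (i + 1))
          = (α - α') • sectorRay i + (β - β') • sectorRay (i + 1) := by
      simp only [sub_smul]; abel
    have hnorm := norm_smul_add_smul_sectorRay_le (sub_nonneg.2 hα'α) (sub_nonneg.2 hβ'β) i (i + 1)
    rw [dist_eq_norm, hdiff, hlin i _ _ hα hβ]
    calc c * ‖(α - α') • sectorRay i + (β - β') • sectorRay (i + 1)‖
        ≤ c * (α - α') + c * (β - β') := by nlinarith
      _ ≤ (α - α') * H (sectorRay i) + (β - β') * H (sectorRay (i + 1)) := add_le_add hα'c hβ'c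
      _ = _ := by linear_combination -hα'H - hβ'H

section Domination

variable {π : ℝ → ℝ}

lemma exists_eventually_dist_le_delta_of_mem_Eset (hcont : Continuous π)
    (hpwl : PiecewiseLinearLocFin π) (hsub : ∀ x y, π (x + y) ≤ π x + π y) {p : ℝ × ℝ}
    (hp : p ∈ Eset π) : ∃ c > 0, ∀ᶠ q in 𝓝 p, ∃ e ∈ Eset π, c * dist q e ≤ delta π q := by
  obtain ⟨a, a', ha⟩ := hpwl.exists_kink hcont p.1
  obtain ⟨b, b', hb⟩ := hpwl.exists_kink hcont p.2
  obtain ⟨d, d', hd⟩ := hpwl.exists_kink hcont (p.1 + p.2)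
  set H : ℝ × ℝ → ℝ := fun v => kink a a' v.1 + kink b b' v.2 - kink d d' (v.1 + v.2) with hH
  have hmodel : ∀ᶠ v in 𝓝 (0 : ℝ × ℝ), delta π (p + v) = H v := by
    have h1 := (continuous_fst.tendsto (0 : ℝ × ℝ)).eventually ha
    have h2 := (continuous_snd.tendsto (0 : ℝ × ℝ)).eventually hb
    have h3 := ((continuous_fst.add continuous_snd).tendsto (0 : ℝ × ℝ)).eventually
      (by simpa using hd)
    filter_upwards [h1, h2, h3] with v h1 h2 h3
    have hp' := mem_Eset_iff_delta_eq_zero.1 hp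
    simp only [delta, Prod.fst_add, Prod.snd_add, Pi.add_apply] at hp' h3 ⊢
    rw [h1, h2, add_add_add_comm p.1, h3]
    linear_combination hp'
  have hlin (i : Fin 6) (α β : ℝ) (hα : 0 ≤ α) (hβ : 0 ≤ β) :
      H (α • sectorRay i + β • sectorRay (i + 1))
        = α * H (sectorRay i) + β * H (sectorRay (i + 1)) := by
    obtain ⟨h1, h2, h3⟩ := sectorRay_mul_nonneg i
    simp only [hH, Prod.fst_add, Prod.snd_add, Prod.smul_fst, Prod.smul_snd, smul_eq_mul]
    rw [add_add_add_comm, ← mul_add, ← mul_add, kink_mul_add_mul hα hβ h1,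
      kink_mul_add_mul hα hβ h2, kink_mul_add_mul hα hβ h3]
    ring
  have hnn : ∀ᶠ v in 𝓝 0, 0 ≤ H v := hmodel.mono fun v hv => hv ▸ delta_nonneg hsub _
  obtain ⟨c, hc, hcH⟩ := exists_dist_le_of_sectorwise_linear hlin hnn
  obtain ⟨r, hr, hball⟩ := Metric.eventually_nhds_iff.1 hmodel
  refine ⟨c, hc, Metric.eventually_nhds_iff.2 ⟨r / 2, by positivity, fun q hq => ?_⟩⟩
  obtain ⟨v', hv'0, hv'norm, hv'dist⟩ := hcH (q - p)
  rw [dist_eq_norm] at hq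
  have hv' : delta π (p + v') = H v' := hball (by rw [dist_zero_right]; linarith)
  have hq' : delta π q = H (q - p) := by
    simpa using hball (y := q - p) (by rw [dist_zero_right]; linarith)
  refine ⟨p + v', mem_Eset_iff_delta_eq_zero.2 (hv'.trans hv'0), ?_⟩
  rwa [hq', dist_eq_norm, ← sub_sub, ← dist_eq_norm]

lemma exists_eventually_dist_le_delta_of_delta_pos (hcont : Continuous π) (h0 : π 0 = 0)
    {p : ℝ × ℝ} (hp : 0 < delta π p) :
    ∃ c > 0, ∀ᶠ q in 𝓝 p, ∃ e ∈ Eset π, c * dist q e ≤ delta π q := by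
  refine ⟨delta π p / 2 / (‖p‖ + 1), by positivity, ?_⟩
  filter_upwards [(continuous_delta hcont).continuousAt.eventually
    (lt_mem_nhds (half_lt_self hp)), Metric.ball_mem_nhds p one_pos] with q hq hqp
  refine ⟨0, by simp [Eset, h0], ?_⟩
  have hqn : ‖q‖ ≤ ‖p‖ + 1 := by
    rw [Metric.mem_ball, dist_eq_norm] at hqp
    linarith [norm_le_norm_add_norm_sub' q p]
  calc delta π p / 2 / (‖p‖ + 1) * dist q 0 ≤ delta π p / 2 / (‖p‖ + 1) * (‖p‖ + 1) := by
        rw [dist_zero_right]; gcongr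
    _ = delta π p / 2 := div_mul_cancel₀ _ (by positivity)
    _ ≤ delta π q := hq.le

lemma exists_eventually_dist_le_delta (hcont : Continuous π) (hpwl : PiecewiseLinearLocFin π)
    (h0 : π 0 = 0) (hsub : ∀ x y, π (x + y) ≤ π x + π y) (p : ℝ × ℝ) :
    ∃ c > 0, ∀ᶠ q in 𝓝 p, ∃ e ∈ Eset π, c * dist q e ≤ delta π q :=
  (delta_nonneg hsub p).eq_or_lt.elim
    (fun h => exists_eventually_dist_le_delta_of_mem_Eset hcont hpwl hsub
      (mem_Eset_iff_delta_eq_zero.2 h.symm))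
    (exists_eventually_dist_le_delta_of_delta_pos hcont h0)

lemma IsCompact.exists_forall_dist_le_delta {K : Set (ℝ × ℝ)} (hK : IsCompact K)
    (hcont : Continuous π) (hpwl : PiecewiseLinearLocFin π) (h0 : π 0 = 0)
    (hsub : ∀ x y, π (x + y) ≤ π x + π y) :
    ∃ c > 0, ∀ q ∈ K, ∃ e ∈ Eset π, c * dist q e ≤ delta π q := by
  -- shrinking `c` keeps a local bound valid, so each one holds on a neighbourhood of `(0, p)`
  have hunif := hK.eventually_forall_of_forall_eventually (x₀ := (0 : ℝ))
    (P := fun c q => ∃ e ∈ Eset π, c * dist q e ≤ delta π q) fun p _ => by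
      obtain ⟨c, hc, hp⟩ := exists_eventually_dist_le_delta hcont hpwl h0 hsub p
      rw [nhds_prod_eq]
      exact ((eventually_lt_nhds hc).prod_mk hp).mono fun z ⟨hz, e, he, hle⟩ =>
        ⟨e, he, (mul_le_mul_of_nonneg_right hz.le dist_nonneg).trans hle⟩
  obtain ⟨c, hunif, hc⟩ :=
    ((hunif.filter_mono nhdsWithin_le_nhds).and eventually_mem_nhdsWithin).exists (f := 𝓝[>] 0)
  exact ⟨c, hc, hunif⟩

lemma exists_forall_dist_le_delta (hcont : Continuous π) (hpwl : PiecewiseLinearLocFin π)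
    (h0 : π 0 = 0) (hsub : ∀ x y, π (x + y) ≤ π x + π y) (hper : Periodic π 1) :
    ∃ c > 0, ∀ q, ∃ e ∈ Eset π, c * dist q e ≤ delta π q := by
  obtain ⟨c, hc, H⟩ := (isCompact_Icc (a := (0 : ℝ × ℝ)) (b := 1)).exists_forall_dist_le_delta
    hcont hpwl h0 hsub
  refine ⟨c, hc, fun q => ?_⟩
  set n : ℝ × ℝ := ((⌊q.1⌋ : ℝ), (⌊q.2⌋ : ℝ))
  have hq : q - n = (Int.fract q.1, Int.fract q.2) :=
    Prod.ext (Int.self_sub_floor _) (Int.self_sub_floor _)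
  obtain ⟨e, he, hle⟩ := H (q - n) (by
    rw [hq]
    exact ⟨⟨Int.fract_nonneg _, Int.fract_nonneg _⟩,
      (Int.fract_lt_one _).le, (Int.fract_lt_one _).le⟩)
  refine ⟨e + n, ?_, ?_⟩
  · rw [mem_Eset_iff_delta_eq_zero] at he ⊢
    rwa [delta_add_intCast hper]
  · rwa [← sub_add_cancel q n, dist_add_right, delta_add_intCast hper]

lemma exists_pos_mul_abs_delta_le {g : ℝ → ℝ} {K : NNReal} (hcont : Continuous π)
    (hpwl : PiecewiseLinearLocFin π) (h0 : π 0 = 0) (hsub : ∀ x y, π (x + y) ≤ π x + π y)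
    (hper : Periodic π 1) (hg : LipschitzWith K g) (hadd : Eset π ⊆ Eset g) :
    ∃ ε > 0, ∀ q, ε * |delta g q| ≤ delta π q := by
  obtain ⟨c, hc, H⟩ := exists_forall_dist_le_delta hcont hpwl h0 hsub hper
  refine ⟨c / (4 * K + 1), by positivity, fun q => ?_⟩
  obtain ⟨e, he, hle⟩ := H q
  have hlip := abs_delta_sub_delta_le hg q e
  rw [mem_Eset_iff_delta_eq_zero.1 (hadd he), sub_zero] at hlip
  have hd := dist_nonneg (x := q) (y := e)
  calc c / (4 * K + 1) * |delta g q| ≤ c / (4 * K + 1) * (4 * K * dist q e) := by gcongr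
    _ ≤ c * dist q e := by
        rw [div_mul_eq_mul_div, div_le_iff₀ (by positivity)]
        nlinarith [mul_nonneg hc.le hd]
    _ ≤ delta π q := hle

end Domination

lemma nonneg_of_subadditive_of_bddBelow {θ : ℝ → ℝ} (h0 : θ 0 = 0)
    (hsub : ∀ x y, θ (x + y) ≤ θ x + θ y) (hbdd : BddBelow (range θ)) (x : ℝ) : 0 ≤ θ x := by
  by_contra! hx
  obtain ⟨M, hM⟩ := hbdd
  have hmul (n : ℕ) : θ (n * x) ≤ n * θ x := by
    induction n with
    | zero => simp [h0]
    | succ k ih =>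
      calc θ ((k + 1 : ℕ) * x) = θ (k * x + x) := by push_cast; ring_nf
        _ ≤ k * θ x + θ x := (hsub _ _).trans (by linarith)
        _ = (k + 1 : ℕ) * θ x := by push_cast; ring
  obtain ⟨n, hn⟩ := exists_nat_gt (-M / -θ x)
  rw [div_lt_iff₀ (neg_pos.2 hx)] at hn
  linarith [hM (mem_range_self (n * x)), hmul n]

lemma MinimalValid.add_mul_perturbation {f δ : ℝ} {π g : ℝ → ℝ} (hπ : MinimalValid f π)
    (hg0 : g 0 = 0) (hgf : g f = 0) (hgper : Periodic g 1) (hadd : Eset π ⊆ Eset g)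
    (hgbdd : Bornology.IsBounded (range g)) (hdom : ∀ q, |δ| * |delta g q| ≤ delta π q) :
    MinimalValid f (fun x => π x + δ * g x) := by
  obtain ⟨hnn, h0, hsub, hper, hsym⟩ := hπ
  have hsub' (x y : ℝ) : π (x + y) + δ * g (x + y) ≤ π x + δ * g x + (π y + δ * g y) := by
    have h := (neg_abs_le (δ * delta g (x, y))).trans' (neg_le_neg (abs_mul δ _ ▸ hdom (x, y)))
    simp only [delta] at h
    linarith
  have hsymE (x : ℝ) : (x, f - x) ∈ Eset π := by
    have hf : π f = 1 := by simpa [h0] using hsym 0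
    simp [Eset, hsym, hf]
  refine ⟨?_, by simp [h0, hg0], hsub', fun x => by simp [hper x, hgper x], fun x => ?_⟩
  · obtain ⟨M, hM⟩ := isBounded_iff_forall_norm_le.1 hgbdd
    refine nonneg_of_subadditive_of_bddBelow (by simp [h0, hg0]) hsub' ⟨-(|δ| * M), ?_⟩
    rintro _ ⟨y, rfl⟩
    have hgy : |δ * g y| ≤ |δ| * M := by
      rw [abs_mul]; gcongr; exact hM _ (mem_range_self y)
    linarith [hnn y, neg_abs_le (δ * g y)]
  · have hgsym := hadd (hsymE x)
    simp only [Eset, mem_ofPred_eq, add_sub_cancel, hgf] at hgsym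
    linear_combination hsym x + δ * hgsym

theorem extreme_cont_pwl_lipschitz_perturbation_general (f : ℝ)
    (π : ℝ → ℝ) (hπ : MinimalValid f π)
    (hcont : Continuous π) (hpwl : PiecewiseLinearLocFin π)
    (hext : ∀ π₁ π₂ : ℝ → ℝ, MinimalValid f π₁ → MinimalValid f π₂ →
      (∀ x, π x = (π₁ x + π₂ x) / 2) → π₁ = π ∧ π₂ = π)
    (π' : ℝ → ℝ)
    (πb : ℝ → ℝ) (hπb : πb = fun x => π' x - π x)
    (hbLip : ∃ K : NNReal, LipschitzWith K πb)
    (hb0 : πb 0 = 0) (hbf : πb f = 0)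
    (hbper : ∀ x, πb (x + 1) = πb x)
    (hbadd : ∀ p ∈ Eset π, πb p.1 + πb p.2 = πb (p.1 + p.2)) :
    (∃ ε : ℝ, 0 < ε ∧ MinimalValid f (fun x => π x + ε * πb x) ∧
      MinimalValid f (fun x => π x - ε * πb x)) ∧ πb = 0 ∧ π' = π := by
  obtain ⟨K, hK⟩ := hbLip
  have hbE : Eset π ⊆ Eset πb := fun p hp => hbadd p hp
  have hbdd := Periodic.isBounded_of_continuous hbper one_ne_zero hK.continuous
  have ⟨_, h0, hsub, hper, _⟩ := hπ
  obtain ⟨ε, hε, hdom⟩ := exists_pos_mul_abs_delta_le hcont hpwl h0 hsub hper hK hbE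
  have hperturb (δ : ℝ) (hδ : |δ| = ε) : MinimalValid f (fun x => π x + δ * πb x) :=
    hπ.add_mul_perturbation hb0 hbf hbper hbE hbdd (hδ ▸ hdom)
  have hplus := hperturb ε (abs_of_pos hε)
  have hminus : MinimalValid f (fun x => π x - ε * πb x) := by
    simpa only [neg_mul, ← sub_eq_add_neg] using hperturb (-ε) (by rw [abs_neg, abs_of_pos hε])
  have hzero : πb = 0 := funext fun x => by
    simpa [hε.ne'] using congrFun (hext _ _ hplus hminus fun x => by ring).1 x
  refine ⟨⟨ε, hε, hplus, hminus⟩, hzero, funext fun x => ?_⟩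
  simpa [hπb, sub_eq_zero] using congrFun hzero x

theorem extreme_cont_pwl_lipschitz_perturbation (f : ℝ) (hf : ∀ z : ℤ, f ≠ z)
    (π : ℝ → ℝ) (hπ : MinimalValid f π)
    (hcont : Continuous π) (hpwl : PiecewiseLinearLocFin π)
    (hext : ∀ π₁ π₂ : ℝ → ℝ, MinimalValid f π₁ → MinimalValid f π₂ →
      (∀ x, π x = (π₁ x + π₂ x) / 2) → π₁ = π ∧ π₂ = π)
    (π' : ℝ → ℝ) (hπ' : MinimalValid f π')
    (hE : Eset π ⊆ Eset π')
    (hLip : ∃ K : NNReal, LipschitzWith K π')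
    (πb : ℝ → ℝ) (hπb : πb = fun x => π' x - π x)
    (hbLip : ∃ K : NNReal, LipschitzWith K πb)
    (hb0 : πb 0 = 0) (hbf : πb f = 0)
    (hbper : ∀ x, πb (x + 1) = πb x)
    (hbadd : ∀ p ∈ Eset π, πb p.1 + πb p.2 = πb (p.1 + p.2)) :
    (∃ ε : ℝ, 0 < ε ∧ MinimalValid f (fun x => π x + ε * πb x) ∧
      MinimalValid f (fun x => π x - ε * πb x)) ∧ πb = 0 ∧ π' = π :=
  extreme_cont_pwl_lipschitz_perturbation_general f π hπ hcont hpwl hext π' πb hπb hbLip hb0 hbf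
    hbper hbadd
end
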